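/- Let μ and ν be Borel probability measures on [0,1] with μ ≼ ν in the convex order, i.e. ∫_{[0,1]} u dμ ≤ ∫_{[0,1]} u dν for every continuous convex function u : [0,1] → ℝ. For a positive definite matrix X define F_μ(X) = ∫_{[0,1]} X((1−λ)X + λI)⁻¹ dμ(λ). Then for all n×n positive definite complex matrices A and B, A^{1/2} F_μ(A^{-1/2} B A^{-1/2}) A^{1/2} ≤ A^{1/2} F_ν(A^{-1/2} B A^{-1/2}) A^{1/2} in the Loewner order (i.e. the difference is positive semidefinite). -/

import Mathlib

open Matrix MeasureTheory
open scoped ComplexOrder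

variable {n : Type*} [Fintype n] [DecidableEq n]

/-- Entrywise (Bochner) integral over `[0,1]` of a matrix-valued function against `μ`. -/
noncomputable def mInt (μ : Measure ℝ) (f : ℝ → Matrix n n ℂ) : Matrix n n ℂ :=
  Matrix.of fun i j => ∫ l in Set.Icc (0:ℝ) 1, (f l) i j ∂μ

/-- `F_μ(X) = ∫_{[0,1]} X((1−λ)X + λI)⁻¹ dμ(λ)`. -/
noncomputable def Fmu (μ : Measure ℝ) (X : Matrix n n ℂ) : Matrix n n ℂ :=
  mInt μ fun l => X * ((1 - l) • X + l • (1 : Matrix n n ℂ))⁻¹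

/-- The unique positive semidefinite square root of a positive (semi)definite matrix,
obtained by applying `Real.sqrt` via the spectral (continuous) functional calculus. -/
noncomputable def msqrt (M : Matrix n n ℂ) : Matrix n n ℂ := cfc Real.sqrt M

/-! For positive definite `X`, each integrand `X((1-λ)X + λI)⁻¹` is `g_λ(X)` in the functional
calculus, where `g_λ(x) = x / ((1-λ)x + λ)`, so `F_μ(X) = f_μ(X)` with `f_μ(x) = ∫ g_λ(x) dμ(λ)`.
For fixed `x > 0`, `λ ↦ g_λ(x)` is continuous and convex on `[0,1]`, being `x` times the
reciprocal of a positive affine function. Hence `f_μ ≤ f_ν` on the spectrum of `X`, so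
`F_μ(X) ≤ F_ν(X)`, and congruence by the self-adjoint `A^{1/2}` preserves the Loewner order. -/

open scoped MatrixOrder

noncomputable def resolventKernel (l x : ℝ) : ℝ := x / ((1 - l) * x + l)

lemma resolventKernel_denom_pos {l x : ℝ} (hl : l ∈ Set.Icc (0:ℝ) 1) (hx : 0 < x) :
    0 < (1 - l) * x + l := by
  obtain ⟨h0, h1⟩ := hl
  rcases h0.eq_or_lt with rfl | h
  · simpa using hx
  · nlinarith [mul_nonneg (sub_nonneg.2 h1) hx.le]

lemma continuousOn_resolventKernel {x : ℝ} (hx : 0 < x) :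
    ContinuousOn (fun l => resolventKernel l x) (Set.Icc 0 1) :=
  continuousOn_const.div (by fun_prop) fun _ hl => (resolventKernel_denom_pos hl hx).ne'

lemma convexOn_resolventKernel {x : ℝ} (hx : 0 < x) :
    ConvexOn ℝ (Set.Icc 0 1) (fun l => resolventKernel l x) := by
  have hinv : ConvexOn ℝ (Set.Ioi 0) (x • fun t : ℝ => t ^ (-1 : ℤ)) :=
    (convexOn_zpow (-1)).smul hx.le
  have hmaps : Set.Icc (0:ℝ) 1 ⊆ AffineMap.lineMap x (1:ℝ) ⁻¹' Set.Ioi 0 := fun l hl => by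
    simp only [Set.mem_preimage, AffineMap.lineMap_apply_ring', Set.mem_Ioi]
    linarith [resolventKernel_denom_pos hl hx]
  refine ((hinv.comp_affineMap _).subset hmaps (convex_Icc 0 1)).congr fun l _ => ?_
  simp only [Function.comp_apply, AffineMap.lineMap_apply_ring', Pi.smul_apply, smul_eq_mul,
    _root_.zpow_neg_one, resolventKernel, div_eq_mul_inv]
  ring

lemma Matrix.PosDef.pos_of_mem_spectrum {𝕜 : Type*} [RCLike 𝕜] {X : Matrix n n 𝕜}
    (hX : X.PosDef) {x : ℝ} (hx : x ∈ spectrum ℝ X) : 0 < x :=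
  (StarOrderedRing.isStrictlyPositive_iff_spectrum_pos X).mp hX.isStrictlyPositive x hx

lemma mul_inv_affine_eq_cfc_resolventKernel {𝕜 : Type*} [RCLike 𝕜] {X : Matrix n n 𝕜}
    (hX : X.PosDef) {l : ℝ} (hl : l ∈ Set.Icc (0:ℝ) 1) :
    X * ((1 - l) • X + l • (1 : Matrix n n 𝕜))⁻¹ = cfc (resolventKernel l) X := by
  have hcont (f : ℝ → ℝ) : ContinuousOn f (spectrum ℝ X) := X.finite_real_spectrum.continuousOn f
  have hden : (1 - l) • X + l • (1 : Matrix n n 𝕜) = cfc (fun x => (1 - l) * x + l) X := by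
    rw [cfc_add .., cfc_const_mul .., cfc_id' .., cfc_const ..]
    simp [Algebra.algebraMap_eq_smul_one]
  have hinv : ((1 - l) • X + l • (1 : Matrix n n 𝕜))⁻¹
      = cfc (fun x => ((1 - l) * x + l)⁻¹) X := by
    refine Matrix.inv_eq_right_inv ?_
    rw [hden, ← cfc_mul _ _ X (hcont _) (hcont _), ← cfc_one ℝ X]
    exact cfc_congr fun x hx =>
      mul_inv_cancel₀ (resolventKernel_denom_pos hl (hX.pos_of_mem_spectrum hx)).ne'
  conv_lhs => enter [1]; rw [← cfc_id' ℝ X]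
  rw [hinv, ← cfc_mul _ _ X (hcont _) (hcont _)]
  rfl

lemma mInt_mul_diagonal_mul (μ : Measure ℝ) (U V : Matrix n n ℂ) (c : n → ℝ → ℝ)
    (hc : ∀ k, IntegrableOn (c k) (Set.Icc 0 1) μ) :
    mInt μ (fun l => U * diagonal (fun k => (c k l : ℂ)) * V)
      = U * diagonal (fun k => ((∫ l in Set.Icc (0:ℝ) 1, c k l ∂μ : ℝ) : ℂ)) * V := by
  ext i j
  simp only [mInt, of_apply]
  simp_rw [mul_apply (M := U * _), mul_diagonal]
  rw [integral_finsetSum _ fun k _ => ((hc k).ofReal.const_mul _).mul_const _]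
  refine Finset.sum_congr rfl fun k _ => ?_
  rw [integral_mul_const, integral_const_mul, integral_complex_ofReal]

lemma mInt_cfc (μ : Measure ℝ) {X : Matrix n n ℂ} (hX : X.IsHermitian) (f : ℝ → ℝ → ℝ)
    (hf : ∀ x ∈ spectrum ℝ X, IntegrableOn (fun l => f l x) (Set.Icc 0 1) μ) :
    mInt μ (fun l => cfc (f l) X) = cfc (fun x => ∫ l in Set.Icc (0:ℝ) 1, f l x ∂μ) X := by
  simp only [hX.cfc_eq, IsHermitian.cfc, Unitary.conjStarAlgAut_apply]
  exact mInt_mul_diagonal_mul μ _ _ (fun k l => f l (hX.eigenvalues k))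
    fun k => hf _ (hX.eigenvalues_mem_spectrum_real k)

lemma Fmu_eq_cfc (μ : Measure ℝ) [IsFiniteMeasure μ] {X : Matrix n n ℂ} (hX : X.PosDef) :
    Fmu μ X = cfc (fun x => ∫ l in Set.Icc (0:ℝ) 1, resolventKernel l x ∂μ) X := by
  rw [Fmu, ← mInt_cfc μ hX.1 resolventKernel fun x hx =>
    (continuousOn_resolventKernel (hX.pos_of_mem_spectrum hx)).integrableOn_compact isCompact_Icc]
  ext i j
  exact setIntegral_congr_fun measurableSet_Icc fun l hl => by
    simp only [mul_inv_affine_eq_cfc_resolventKernel hX hl]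

def ConvexOrderLE (μ ν : Measure ℝ) : Prop :=
  ∀ u : ℝ → ℝ, ContinuousOn u (Set.Icc 0 1) → ConvexOn ℝ (Set.Icc 0 1) u →
    ∫ l in Set.Icc (0:ℝ) 1, u l ∂μ ≤ ∫ l in Set.Icc (0:ℝ) 1, u l ∂ν

lemma Fmu_le_Fmu_of_convexOrderLE {μ ν : Measure ℝ} [IsFiniteMeasure μ] [IsFiniteMeasure ν]
    (horder : ConvexOrderLE μ ν) {X : Matrix n n ℂ} (hX : X.PosDef) : Fmu μ X ≤ Fmu ν X := by
  rw [Fmu_eq_cfc μ hX, Fmu_eq_cfc ν hX]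
  refine cfc_mono (hf := X.finite_real_spectrum.continuousOn _)
    (hg := X.finite_real_spectrum.continuousOn _) fun x hx => ?_
  have hx0 := hX.pos_of_mem_spectrum hx
  exact horder _ (continuousOn_resolventKernel hx0) (convexOn_resolventKernel hx0)

lemma Matrix.PosDef.msqrt {A : Matrix n n ℂ} (hA : A.PosDef) : (msqrt A).PosDef := by
  refine ((cfc_isStrictlyPositive_iff Real.sqrt A).2 fun x hx => ?_).posDef
  exact Real.sqrt_pos.2 (hA.pos_of_mem_spectrum hx)

theorem sigma_mu_le_sigma_nu_of_convex_order_general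
    (μ ν : Measure ℝ) [IsProbabilityMeasure μ] [IsProbabilityMeasure ν]
    (horder : ∀ u : ℝ → ℝ, ContinuousOn u (Set.Icc (0:ℝ) 1) →
      ConvexOn ℝ (Set.Icc (0:ℝ) 1) u →
      ∫ l in Set.Icc (0:ℝ) 1, u l ∂μ ≤ ∫ l in Set.Icc (0:ℝ) 1, u l ∂ν)
    (A B : Matrix n n ℂ) (hA : A.PosDef) (hB : B.PosDef) :
    (msqrt A * Fmu ν ((msqrt A)⁻¹ * B * (msqrt A)⁻¹) * msqrt A -
      msqrt A * Fmu μ ((msqrt A)⁻¹ * B * (msqrt A)⁻¹) * msqrt A).PosSemidef := by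
  have hS := hA.msqrt
  have hX : ((msqrt A)⁻¹ * B * (msqrt A)⁻¹).PosDef := by
    simpa [hS.inv.1.star_eq] using (IsUnit.posDef_star_left_conjugate_iff hS.inv.isUnit).2 hB
  exact hS.1.isSelfAdjoint.conjugate_le_conjugate (Fmu_le_Fmu_of_convexOrderLE horder hX)

/-- If `μ ≼ ν` in the convex order then for all positive definite `A`, `B`,
`A^{1/2} F_μ(A^{-1/2} B A^{-1/2}) A^{1/2} ≤ A^{1/2} F_ν(A^{-1/2} B A^{-1/2}) A^{1/2}` in the
Loewner order. -/
theorem sigma_mu_le_sigma_nu_of_convex_order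
    (μ ν : Measure ℝ) [IsProbabilityMeasure μ] [IsProbabilityMeasure ν]
    (hμsupp : μ (Set.Icc (0:ℝ) 1)ᶜ = 0)
    (hνsupp : ν (Set.Icc (0:ℝ) 1)ᶜ = 0)
    (horder : ∀ u : ℝ → ℝ, ContinuousOn u (Set.Icc (0:ℝ) 1) →
      ConvexOn ℝ (Set.Icc (0:ℝ) 1) u →
      ∫ l in Set.Icc (0:ℝ) 1, u l ∂μ ≤ ∫ l in Set.Icc (0:ℝ) 1, u l ∂ν)
    (A B : Matrix n n ℂ) (hA : A.PosDef) (hB : B.PosDef) :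
    (msqrt A * Fmu ν ((msqrt A)⁻¹ * B * (msqrt A)⁻¹) * msqrt A -
      msqrt A * Fmu μ ((msqrt A)⁻¹ * B * (msqrt A)⁻¹) * msqrt A).PosSemidef :=
  sigma_mu_le_sigma_nu_of_convex_order_general μ ν horder A B hA hB
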